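/- arXiv:2007.06280 — 7 statements merged into one kernel-verified Lean document; each statement's English description precedes it below -/
import Mathlib

section
/- The matrix H = w·ee^T + diag(a), where e is the all-ones vector in R^n and a ∈ R^n has all positive entries, is positive definite if and only if 1 + w·∑_{i=1}^n (1/a_i) > 0. -/
/-!
Writing `s = ∑ i, (a i)⁻¹`, the quadratic form of `H` is `x ↦ w (∑ i, x i)² + ∑ i, a i (x i)²`.
At `x = a⁻¹` it equals `s (1 + w s)`, so positivity forces `1 + w s > 0`. Conversely, the
weighted Cauchy–Schwarz inequality `(∑ i, x i)² ≤ s ∑ i, a i (x i)²` bounds the form below by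
`min 1 (1 + w s) · ∑ i, a i (x i)²`, which is positive for `x ≠ 0`.
-/

open Matrix Finset

variable {ι : Type*}

def constAddDiagonal [DecidableEq ι] (w : ℝ) (a : ι → ℝ) : Matrix ι ι ℝ :=
  of fun i k => w + if i = k then a i else 0

lemma constAddDiagonal_isHermitian [DecidableEq ι] (w : ℝ) (a : ι → ℝ) :
    (constAddDiagonal w a).IsHermitian := by
  ext i k
  by_cases h : i = k
  · subst h; rfl
  · simp [constAddDiagonal, h, Ne.symm h]

lemma constAddDiagonal_mulVec [Fintype ι] [DecidableEq ι] (w : ℝ) (a x : ι → ℝ) (i : ι) :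
    (constAddDiagonal w a *ᵥ x) i = w * ∑ k, x k + a i * x i := by
  simp [constAddDiagonal, mulVec, dotProduct, add_mul, sum_add_distrib, ← mul_sum]

lemma dotProduct_constAddDiagonal_mulVec [Fintype ι] [DecidableEq ι] (w : ℝ) (a x : ι → ℝ) :
    x ⬝ᵥ (constAddDiagonal w a *ᵥ x) = w * (∑ i, x i) ^ 2 + ∑ i, a i * x i ^ 2 := by
  simp only [dotProduct, constAddDiagonal_mulVec, mul_add, sum_add_distrib, ← sum_mul]
  congr 1
  · ring
  · exact sum_congr rfl fun i _ => by ring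

lemma sq_sum_le_sum_inv_mul_sum_mul_sq [Fintype ι] {a : ι → ℝ} (ha : ∀ i, 0 < a i) (x : ι → ℝ) :
    (∑ i, x i) ^ 2 ≤ (∑ i, (a i)⁻¹) * ∑ i, a i * x i ^ 2 :=
  sum_sq_le_sum_mul_sum_of_sq_le_mul _ (fun i _ => (inv_pos.2 (ha i)).le)
    (fun i _ => mul_nonneg (ha i).le (sq_nonneg _))
    fun i _ => by rw [inv_mul_cancel_left₀ (ha i).ne']

lemma sum_mul_sq_pos [Fintype ι] {a x : ι → ℝ} (ha : ∀ i, 0 < a i) (hx : x ≠ 0) :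
    0 < ∑ i, a i * x i ^ 2 := by
  obtain ⟨j, hj⟩ := Function.ne_iff.1 hx
  exact sum_pos' (fun i _ => mul_nonneg (ha i).le (sq_nonneg _))
    ⟨j, mem_univ j, mul_pos (ha j) (sq_pos_of_ne_zero hj)⟩

theorem constAddDiagonal_posDef_iff [Fintype ι] [DecidableEq ι] {w : ℝ} {a : ι → ℝ} (ha : ∀ i, 0 < a i) :
    (constAddDiagonal w a).PosDef ↔ 0 < 1 + w * ∑ i, (a i)⁻¹ := by
  set s := ∑ i, (a i)⁻¹
  rw [posDef_iff_dotProduct_mulVec, and_iff_right (constAddDiagonal_isHermitian w a)]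
  simp only [star_trivial, dotProduct_constAddDiagonal_mulVec]
  constructor
  · intro hpos
    cases isEmpty_or_nonempty ι
    · simp [s]
    have hs : 0 < s := sum_pos (fun i _ => inv_pos.2 (ha i)) univ_nonempty
    obtain ⟨i⟩ := ‹Nonempty ι›
    have h := @hpos (fun i => (a i)⁻¹) (Function.ne_iff.2 ⟨i, (inv_pos.2 (ha i)).ne'⟩)
    have hsum : ∑ i, a i * (a i)⁻¹ ^ 2 = s :=
      sum_congr rfl fun i _ => by field_simp [(ha i).ne']
    rw [hsum] at h
    exact pos_of_mul_pos_right (by linear_combination h) hs.le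
  · intro h x hx
    have hQ := sum_mul_sq_pos ha hx
    have hCS := sq_sum_le_sum_inv_mul_sum_mul_sq ha x
    rcases le_or_gt 0 w with hw | hw <;> nlinarith [sq_nonneg (∑ i, x i)]

theorem stmt_0_general (n : ℕ) (w : ℝ) (a : Fin n → ℝ) (ha : ∀ i, 0 < a i) :
    (Matrix.of fun i k : Fin n => w + if i = k then a i else 0).PosDef ↔
      0 < 1 + w * ∑ i, (a i)⁻¹ :=
  constAddDiagonal_posDef_iff ha

/-- H = w·ee^T + diag(a) with all a_i > 0 is positive definite iff 1 + w·∑ 1/a_i > 0. -/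
theorem stmt_0 (n : ℕ) (hn : 1 ≤ n) (w : ℝ) (a : Fin n → ℝ) (ha : ∀ i, 0 < a i) :
    (Matrix.of fun i k : Fin n => w + if i = k then a i else 0).PosDef ↔
      0 < 1 + w * ∑ i, (a i)⁻¹ :=
  stmt_0_general n w a ha
end

section
/- If 1 + w·∑_{i=1}^n 1/a_i > 0 and all a_i > 0, then every leading principal minor of the matrix w·ee^T + diag(a) is strictly positive. -/
/-!
Every leading block of `w • eeᵀ + diagonal a` has the same shape, and by the matrix determinant
lemma its determinant is `(∏ aᵢ) * (1 + w * ∑ aᵢ⁻¹)`, the sum running over the block. The product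
is positive, and dropping nonnegative terms from `∑ aᵢ⁻¹` only moves `1 + w * ∑ aᵢ⁻¹` towards `1`,
so the second factor stays positive.
-/

open Matrix Finset

section DeterminantLemma

variable {ι K : Type*} [Fintype ι] [DecidableEq ι] [Field K]

theorem det_diagonal_add_replicateCol_mul_replicateRow {d : ι → K} (hd : ∀ i, d i ≠ 0)
    (u v : ι → K) :
    (diagonal d + replicateCol Unit u * replicateRow Unit v).det =
      (∏ i, d i) * (1 + ∑ i, v i * u i / d i) := by
  have hfactor : diagonal d + replicateCol Unit u * replicateRow Unit v =
      diagonal d * (1 + replicateCol Unit (fun i => u i / d i) * replicateRow Unit v) := by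
    rw [mul_add, mul_one, ← Matrix.mul_assoc]
    congr 2
    ext i j
    simp [mul_div_cancel₀ _ (hd i)]
  rw [hfactor, det_mul, det_diagonal, det_one_add_replicateCol_mul_replicateRow, dotProduct]
  simp only [mul_div_assoc]

theorem det_const_add_diagonal {a : ι → K} (ha : ∀ i, a i ≠ 0) (w : K) :
    (of fun i j => w + if i = j then a i else 0).det = (∏ i, a i) * (1 + w * ∑ i, (a i)⁻¹) := by
  have hsplit : (of fun i j => w + if i = j then a i else 0) =
      diagonal a + replicateCol Unit (fun _ => w) * replicateRow Unit (fun _ => (1 : K)) := by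
    ext i j
    simp [diagonal_apply, mul_apply, add_comm]
  rw [hsplit, det_diagonal_add_replicateCol_mul_replicateRow ha, mul_sum]
  simp only [one_mul, div_eq_mul_inv]

end DeterminantLemma

theorem submatrix_const_add_diagonal {ι κ R : Type*} [DecidableEq ι] [DecidableEq κ]
    [AddZeroClass R] (w : R) (a : ι → R) {e : κ → ι} (he : Function.Injective e) :
    (of fun i j => w + if i = j then a i else 0).submatrix e e =
      of fun i j => w + if i = j then a (e i) else 0 := by
  ext i j
  simp [he.eq_iff]

theorem one_add_mul_sum_comp_pos {ι κ : Type*} [Fintype ι] [Fintype κ] {w : ℝ} {f : ι → ℝ}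
    (hf : ∀ i, 0 ≤ f i) (h : 0 < 1 + w * ∑ i, f i) {e : κ → ι} (he : Function.Injective e) :
    0 < 1 + w * ∑ j, f (e j) := by
  rcases le_or_gt 0 w with hw | hw
  · have : 0 ≤ w * ∑ j, f (e j) := mul_nonneg hw (sum_nonneg fun j _ => hf (e j))
    linarith
  · have hle : ∑ j, f (e j) ≤ ∑ i, f i := by
      calc ∑ j, f (e j) = ∑ i ∈ univ.map ⟨e, he⟩, f i := (sum_map univ ⟨e, he⟩ f).symm
        _ ≤ ∑ i, f i := sum_le_univ_sum_of_nonneg hf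
    nlinarith

theorem stmt_2_general (n : ℕ) (w : ℝ) (a : Fin n → ℝ) (ha : ∀ i, 0 < a i)
    (hc : 0 < 1 + w * ∑ i, (a i)⁻¹) (k : ℕ) (hk : k ≤ n) :
    0 < ((Matrix.of fun i j : Fin n => w + if i = j then a i else 0).submatrix
      (Fin.castLE hk) (Fin.castLE hk)).det := by
  rw [submatrix_const_add_diagonal w a (Fin.castLE_injective hk),
    det_const_add_diagonal (fun i => (ha _).ne')]
  exact mul_pos (prod_pos fun i _ => ha _)
    (one_add_mul_sum_comp_pos (fun i => (inv_pos.2 (ha i)).le) hc (Fin.castLE_injective hk))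

/-- If 1 + w·∑ 1/a_i > 0 and all a_i > 0, every leading principal minor of
w·ee^T + diag(a) is strictly positive. -/
theorem stmt_2 (n : ℕ) (hn : 1 ≤ n) (w : ℝ) (a : Fin n → ℝ) (ha : ∀ i, 0 < a i)
    (hc : 0 < 1 + w * ∑ i, (a i)⁻¹) (k : ℕ) (hk : k ≤ n) :
    0 < ((Matrix.of fun i j : Fin n => w + if i = j then a i else 0).submatrix
      (Fin.castLE hk) (Fin.castLE hk)).det :=
  stmt_2_general n w a ha hc k hk
end

section
/- The function f(x) = (w/2)·(∑_{i=1}^n x_i)^2 + ∑_{i=1}^n ((a_i/2)·x_i^2 + b_i·x_i) on R^n is strictly convex if and only if 1 + w·∑_{i=1}^n 1/a_i > 0. -/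
open Finset

private lemma key_posdef (n : ℕ) (w : ℝ) (a : Fin n → ℝ) (ha : ∀ i, 0 < a i)
    (hw : 0 < 1 + w * ∑ i, (a i)⁻¹) (v : Fin n → ℝ) (hv : v ≠ 0) :
    0 < w * (∑ i, v i) ^ 2 + ∑ i, a i * v i ^ 2 := by
  obtain ⟨j, hj⟩ : ∃ j, v j ≠ 0 := by
    by_contra h; push_neg at h; exact hv (funext h)
  have hT : 0 < ∑ i, a i * v i ^ 2 := by
    apply Finset.sum_pos' (fun i _ => by have := ha i; positivity)
    exact ⟨j, Finset.mem_univ j, by have := ha j; positivity⟩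
  rcases le_or_gt 0 w with hw0 | hw0
  · have : 0 ≤ w * (∑ i, v i) ^ 2 := by positivity
    linarith
  · -- Cauchy-Schwarz
    have hcs : (∑ i, v i) ^ 2 ≤ (∑ i, (a i)⁻¹) * ∑ i, a i * v i ^ 2 := by
      have h1 : (∑ i, v i) = ∑ i, (Real.sqrt (a i))⁻¹ * (Real.sqrt (a i) * v i) := by
        apply Finset.sum_congr rfl; intro i _
        have := ha i
        have : Real.sqrt (a i) ≠ 0 := by positivity
        field_simp
      have h2 : (∑ i : Fin n, ((Real.sqrt (a i))⁻¹) ^ 2) = ∑ i, (a i)⁻¹ := by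
        apply Finset.sum_congr rfl; intro i _
        have := ha i
        rw [← Real.sqrt_inv, Real.sq_sqrt (by positivity)]
      have h3 : (∑ i : Fin n, (Real.sqrt (a i) * v i) ^ 2) = ∑ i, a i * v i ^ 2 := by
        apply Finset.sum_congr rfl; intro i _
        rw [mul_pow, Real.sq_sqrt (ha i).le]
      calc (∑ i, v i) ^ 2
          = (∑ i, (Real.sqrt (a i))⁻¹ * (Real.sqrt (a i) * v i)) ^ 2 := by rw [h1]
        _ ≤ (∑ i : Fin n, ((Real.sqrt (a i))⁻¹) ^ 2) * ∑ i : Fin n, (Real.sqrt (a i) * v i) ^ 2 :=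
            Finset.sum_mul_sq_le_sq_mul_sq _ _ _
        _ = (∑ i, (a i)⁻¹) * ∑ i, a i * v i ^ 2 := by rw [h2, h3]
    nlinarith [mul_le_mul_of_nonpos_left hcs hw0.le]

/-- f(x) = (w/2)(∑ x_i)² + ∑ ((a_i/2)x_i² + b_i x_i) is strictly convex on ℝⁿ iff
1 + w·∑ 1/a_i > 0. -/
theorem stmt_3 (n : ℕ) (hn : 1 ≤ n) (w : ℝ) (a b : Fin n → ℝ) (ha : ∀ i, 0 < a i) :
    StrictConvexOn ℝ Set.univ
      (fun x : Fin n → ℝ =>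
        w / 2 * (∑ i, x i) ^ 2 + ∑ i, (a i / 2 * x i ^ 2 + b i * x i)) ↔
      0 < 1 + w * ∑ i, (a i)⁻¹ := by
  have hne : Nonempty (Fin n) := ⟨⟨0, hn⟩⟩
  set s : ℝ := ∑ i, (a i)⁻¹ with hs
  have hs_pos : 0 < s := Finset.sum_pos (fun i _ => by have := ha i; positivity) Finset.univ_nonempty
  constructor
  · intro hcvx
    set x : Fin n → ℝ := fun i => -(a i)⁻¹ with hx
    set y : Fin n → ℝ := fun i => (a i)⁻¹ with hy
    have hxy : x ≠ y := by
      intro h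
      have := congrFun h ⟨0, hn⟩
      simp only [hx, hy] at this
      have := ha ⟨0, hn⟩
      have h0 : (0:ℝ) < (a ⟨0, hn⟩)⁻¹ := by positivity
      linarith
    have h := hcvx.2 (Set.mem_univ x) (Set.mem_univ y) hxy
      (by norm_num : (0:ℝ) < 1/2) (by norm_num : (0:ℝ) < 1/2) (by norm_num)
    have hmid : (1/2 : ℝ) • x + (1/2 : ℝ) • y = 0 := by
      funext i
      simp only [Pi.add_apply, Pi.smul_apply, smul_eq_mul, Pi.zero_apply, hx, hy]
      ring
    rw [hmid] at h
    simp only [smul_eq_mul, Pi.zero_apply] at h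
    have hf0 : (w / 2 * (∑ i : Fin n, (0:ℝ)) ^ 2 +
        ∑ i : Fin n, (a i / 2 * (0:ℝ) ^ 2 + b i * (0:ℝ))) = 0 := by simp
    rw [hf0] at h
    have hfx : (w / 2 * (∑ i, x i) ^ 2 + ∑ i, (a i / 2 * x i ^ 2 + b i * x i))
        = w / 2 * s ^ 2 + ∑ i, ((a i)⁻¹ / 2 - b i * (a i)⁻¹) := by
      simp only [hx]
      rw [Finset.sum_neg_distrib, neg_sq]
      congr 1
      apply Finset.sum_congr rfl; intro i _
      have : a i ≠ 0 := (ha i).ne'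
      field_simp
      ring
    have hfy : (w / 2 * (∑ i, y i) ^ 2 + ∑ i, (a i / 2 * y i ^ 2 + b i * y i))
        = w / 2 * s ^ 2 + ∑ i, ((a i)⁻¹ / 2 + b i * (a i)⁻¹) := by
      simp only [hy]
      congr 1
      apply Finset.sum_congr rfl; intro i _
      have : a i ≠ 0 := (ha i).ne'
      field_simp
    rw [hfx, hfy] at h
    have hsplit : (∑ i, ((a i)⁻¹ / 2 - b i * (a i)⁻¹)) + (∑ i, ((a i)⁻¹ / 2 + b i * (a i)⁻¹))
        = s := by
      rw [← Finset.sum_add_distrib, hs]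
      apply Finset.sum_congr rfl; intro i _; ring
    nlinarith [h, hsplit]
  · intro hw
    constructor
    · exact convex_univ
    · intro x _ y _ hxy p q hp hq hpq
      simp only [smul_eq_mul, Pi.add_apply, Pi.smul_apply, smul_eq_mul]
      have key := key_posdef n w a ha hw (x - y) (sub_ne_zero.mpr hxy)
      have hsub : (∑ i, (x - y) i) = (∑ i, x i) - (∑ i, y i) := by
        simp [Finset.sum_sub_distrib]
      rw [hsub] at key
      have hq' : q = 1 - p := by linarith
      subst hq'
      have h1 : (∑ i, (p * x i + (1 - p) * y i)) = p * (∑ i, x i) + (1 - p) * (∑ i, y i) := by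
        rw [Finset.sum_add_distrib, ← Finset.mul_sum, ← Finset.mul_sum]
      have h2 : (∑ i, (a i / 2 * (p * x i + (1 - p) * y i) ^ 2 + b i * (p * x i + (1 - p) * y i)))
          = p * (∑ i, (a i / 2 * x i ^ 2 + b i * x i))
            + (1 - p) * (∑ i, (a i / 2 * y i ^ 2 + b i * y i))
            - p * (1 - p) / 2 * (∑ i, a i * ((x - y) i) ^ 2) := by
        rw [Finset.mul_sum, Finset.mul_sum, Finset.mul_sum, ← Finset.sum_add_distrib,
          ← Finset.sum_sub_distrib]
        apply Finset.sum_congr rfl; intro i _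
        simp only [Pi.sub_apply]
        ring
      rw [h1, h2]
      nlinarith [key, mul_pos hp hq]
end

section
/- Let a_i > 0 for i in a finite index set N, let w ∈ R satisfy 1 + w·∑_{i∈N} 1/a_i > 0, and let b ∈ R^N, l, u ∈ R^N with l ≤ u. Suppose for λ ∈ R the vectors x(λ), μ(λ) ∈ R^N satisfy: w·(∑_{k∈N} x_k(λ)) + a_i·x_i(λ) + b_i + λ + μ_i(λ) = 0 for all i, l_i ≤ x_i(λ) ≤ u_i, max(μ_i(λ),0)·(x_i(λ)−u_i) = 0, and min(μ_i(λ),0)·(x_i(λ)−l_i) = 0. Then for any λ_1 < λ_2 and every i ∈ N, x_i(λ_1) ≥ x_i(λ_2). -/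
/-- Monotonicity: under stationarity, box feasibility, complementary slackness and
1 + w·∑ 1/a_i > 0, λ₁ < λ₂ implies x_i(λ₁) ≥ x_i(λ₂) for every i. -/
theorem stmt_9 {ι : Type*} [Fintype ι] [Nonempty ι]
    (a b l u : ι → ℝ) (ha : ∀ i, 0 < a i) (hlu : ∀ i, l i ≤ u i) (w : ℝ)
    (hw : 0 < 1 + w * ∑ i, (a i)⁻¹)
    (x μ : ℝ → ι → ℝ)
    (hstat : ∀ lam i, w * (∑ k, x lam k) + a i * x lam i + b i + lam + μ lam i = 0)
    (hbox : ∀ lam i, l i ≤ x lam i ∧ x lam i ≤ u i)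
    (hcs1 : ∀ lam i, max (μ lam i) 0 * (x lam i - u i) = 0)
    (hcs2 : ∀ lam i, min (μ lam i) 0 * (x lam i - l i) = 0) :
    ∀ lam₁ lam₂, lam₁ < lam₂ → ∀ i, x lam₂ i ≤ x lam₁ i := by
  -- normal cone property
  have ncone : ∀ lam j y, l j ≤ y → y ≤ u j → 0 ≤ μ lam j * (x lam j - y) := by
    intro lam j y hy1 hy2
    rcases lt_trichotomy (μ lam j) 0 with h | h | h
    · have hx : x lam j = l j := by
        have h2 := hcs2 lam j
        rw [min_eq_left h.le] at h2
        rcases mul_eq_zero.mp h2 with h' | h'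
        · exact absurd h' h.ne
        · linarith
      rw [hx]
      exact mul_nonneg_iff.mpr (Or.inr ⟨h.le, by linarith⟩)
    · simp [h]
    · have hx : x lam j = u j := by
        have h1 := hcs1 lam j
        rw [max_eq_left h.le] at h1
        rcases mul_eq_zero.mp h1 with h' | h'
        · exact absurd h' h.ne'
        · linarith
      rw [hx]
      exact mul_nonneg h.le (by linarith)
  intro lam₁ lam₂ hlt i
  set D : ℝ := (∑ k, x lam₁ k) - (∑ k, x lam₂ k) with hD
  set c : ℝ := (lam₂ - lam₁) - w * D with hc
  have hkey : ∀ j, a j * (x lam₁ j - x lam₂ j) ^ 2 ≤ c * (x lam₁ j - x lam₂ j) := by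
    intro j
    have h1 := hstat lam₁ j
    have h2 := hstat lam₂ j
    have hmu : μ lam₁ j - μ lam₂ j = c - a j * (x lam₁ j - x lam₂ j) := by
      rw [hc, hD]; linear_combination h1 - h2
    have n1 := ncone lam₁ j (x lam₂ j) (hbox lam₂ j).1 (hbox lam₂ j).2
    have n2 := ncone lam₂ j (x lam₁ j) (hbox lam₁ j).1 (hbox lam₁ j).2
    have h3 : 0 ≤ (μ lam₁ j - μ lam₂ j) * (x lam₁ j - x lam₂ j) := by nlinarith [n1, n2]
    rw [hmu] at h3
    nlinarith [h3]
  have hSinv : 0 ≤ ∑ k, (a k)⁻¹ :=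
    Finset.sum_nonneg fun k _ => inv_nonneg.mpr (ha k).le
  have hcpos : 0 < c := by
    by_contra hcle
    push_neg at hcle
    have hd0 : ∀ j, x lam₁ j - x lam₂ j ≤ 0 := by
      intro j
      by_contra hdj
      push_neg at hdj
      nlinarith [hkey j, mul_pos (mul_pos (ha j) hdj) hdj,
        mul_nonpos_iff.mpr (Or.inr ⟨hcle, hdj.le⟩)]
    have hdlb : ∀ j, c * (a j)⁻¹ ≤ x lam₁ j - x lam₂ j := by
      intro j
      have hcad : c ≤ a j * (x lam₁ j - x lam₂ j) := by
        nlinarith [hkey j, ha j, hd0 j]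
      rw [mul_inv_le_iff₀ (ha j)]
      linarith [hcad]
    have hSle : c * (∑ k, (a k)⁻¹) ≤ D := by
      rw [hD, ← Finset.sum_sub_distrib, Finset.mul_sum]
      exact Finset.sum_le_sum fun k _ => hdlb k
    have hDle : D ≤ 0 := by
      rw [hD, ← Finset.sum_sub_distrib]
      exact Finset.sum_nonpos fun k _ => hd0 k
    rcases le_or_gt 0 w with hw0 | hw0
    · have : w * D ≤ 0 := mul_nonpos_iff.mpr (Or.inl ⟨hw0, hDle⟩)
      linarith [hc]
    · have h1 : w * D ≤ w * (c * (∑ k, (a k)⁻¹)) := by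
        exact mul_le_mul_of_nonpos_left hSle hw0.le
      have h2 : c * (1 + w * (∑ k, (a k)⁻¹)) ≤ 0 :=
        mul_nonpos_iff.mpr (Or.inr ⟨hcle, hw.le⟩)
      nlinarith [h1, h2, hc, hlt]
  by_contra hdi
  push_neg at hdi
  have hd : x lam₁ i - x lam₂ i < 0 := by linarith
  nlinarith [hkey i, mul_pos (mul_pos (ha i) (neg_pos.mpr hd)) (neg_pos.mpr hd),
    mul_pos hcpos (neg_pos.mpr hd)]
end

section
/- Under the hypotheses of the monotonicity lemma (stationarity, box feasibility, complementary slackness, and 1 + w·∑_{i∈N} 1/a_i > 0), if additionally w < 0, then for any λ_1 < λ_2 and every i ∈ N, μ_i(λ_1) ≥ μ_i(λ_2). -/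
/-- If additionally w < 0, then λ₁ < λ₂ implies μ_i(λ₁) ≥ μ_i(λ₂) for every i. -/
theorem stmt_10 {ι : Type*} [Fintype ι] [Nonempty ι]
    (a b l u : ι → ℝ) (ha : ∀ i, 0 < a i) (hlu : ∀ i, l i ≤ u i) (w : ℝ)
    (hw : 0 < 1 + w * ∑ i, (a i)⁻¹) (hwneg : w < 0)
    (x μ : ℝ → ι → ℝ)
    (hstat : ∀ lam i, w * (∑ k, x lam k) + a i * x lam i + b i + lam + μ lam i = 0)
    (hbox : ∀ lam i, l i ≤ x lam i ∧ x lam i ≤ u i)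
    (hcs1 : ∀ lam i, max (μ lam i) 0 * (x lam i - u i) = 0)
    (hcs2 : ∀ lam i, min (μ lam i) 0 * (x lam i - l i) = 0)
    (hmono : ∀ i, Antitone fun lam => x lam i) :
    ∀ lam₁ lam₂, lam₁ < lam₂ → ∀ i, μ lam₂ i ≤ μ lam₁ i := by
  intro lam₁ lam₂ hlt i
  by_contra h
  push_neg at h
  have hmx : x lam₂ i ≤ x lam₁ i := hmono i hlt.le
  have hxeq : x lam₂ i = x lam₁ i := by
    rcases lt_or_ge 0 (μ lam₂ i) with hpos | hnp
    · have hc := hcs1 lam₂ i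
      rw [max_eq_left hpos.le] at hc
      rcases mul_eq_zero.mp hc with h0 | h0
      · exact absurd h0 hpos.ne'
      · have := (hbox lam₁ i).2
        linarith
    · have hneg : μ lam₁ i < 0 := lt_of_lt_of_le h hnp
      have hc := hcs2 lam₁ i
      rw [min_eq_left hneg.le] at hc
      rcases mul_eq_zero.mp hc with h0 | h0
      · exact absurd h0 hneg.ne
      · have := (hbox lam₂ i).1
        linarith
  have hy : (∑ k, x lam₂ k) ≤ ∑ k, x lam₁ k :=
    Finset.sum_le_sum fun k _ => hmono k hlt.le
  have h1 := hstat lam₁ i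
  have h2 := hstat lam₂ i
  have hw2 : w * ∑ k, x lam₁ k ≤ w * ∑ k, x lam₂ k :=
    mul_le_mul_of_nonpos_left hy hwneg.le
  rw [hxeq] at h2
  linarith
end

section
/- Under the KKT setup with strict convexity (1 + w·∑_{i∈N} 1/a_i > 0), for indices i, k in the same group N with a_i·u_i + b_i > a_k·u_k + b_k, if μ_k(λ) = 0 and x_k(λ) = u_k for some λ, then x_i(λ) < u_i, where μ_i(λ) ≥ 0 whenever x_i(λ) = u_i. -/
/-- Breakpoint ordering step: if a_iu_i + b_i > a_ku_k + b_k, μ_k(λ) = 0 and x_k(λ) = u_k,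
then x_i(λ) < u_i. -/
theorem stmt_14 {ι : Type*} [Fintype ι] (a b l u : ι → ℝ) (ha : ∀ i, 0 < a i)
    (hlu : ∀ i, l i ≤ u i) (w lam : ℝ) (hw : 0 < 1 + w * ∑ i, (a i)⁻¹)
    (x μ : ι → ℝ)
    (hstat : ∀ i, w * (∑ k, x k) + a i * x i + b i + lam + μ i = 0)
    (hbox : ∀ i, l i ≤ x i ∧ x i ≤ u i)
    (hcs : ∀ i, x i = u i → 0 ≤ μ i)
    (i k : ι) (hik : a k * u k + b k < a i * u i + b i)
    (hxk : x k = u k) (hμk : μ k = 0) :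
    x i < u i := by
  by_contra h
  push_neg at h
  have hxi : x i = u i := le_antisymm (hbox i).2 h
  have hμi := hcs i hxi
  have h1 := hstat i
  have h2 := hstat k
  rw [hxi] at h1
  rw [hxk, hμk] at h2
  linarith
end

section
/- Let f_i(t) = (a_i/2)·t^2 + b_i·t with a_i > 0 for i ∈ N (finite), and let x* minimize ∑_i f_i(x_i) subject to ∑_i x_i = S and l_i ≤ x_i ≤ u_i, where ∑_i l_i ≤ S ≤ ∑_i u_i and l ≤ u. Then a minimizer exists, it is unique, and there exists λ ∈ R such that for every i: x*_i = u_i if a_i·u_i + b_i ≤ −λ, x*_i = l_i if a_i·l_i + b_i ≥ −λ, and otherwise x*_i = (−λ − b_i)/a_i. -/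
open Finset

/-- The separable quadratic resource allocation problem has a unique minimizer, characterized
by a multiplier λ through breakpoint thresholds. -/
theorem stmt_15 {ι : Type*} [Fintype ι] [Nonempty ι] (a b l u : ι → ℝ)
    (ha : ∀ i, 0 < a i) (hlu : ∀ i, l i ≤ u i) (S : ℝ)
    (hS1 : ∑ i, l i ≤ S) (hS2 : S ≤ ∑ i, u i) :
    ∃ x : ι → ℝ,
      x ∈ {y : ι → ℝ | ∑ i, y i = S ∧ ∀ i, l i ≤ y i ∧ y i ≤ u i} ∧
      IsMinOn (fun y : ι → ℝ => ∑ i, (a i / 2 * y i ^ 2 + b i * y i))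
        {y : ι → ℝ | ∑ i, y i = S ∧ ∀ i, l i ≤ y i ∧ y i ≤ u i} x ∧
      (∀ x' ∈ {y : ι → ℝ | ∑ i, y i = S ∧ ∀ i, l i ≤ y i ∧ y i ≤ u i},
        IsMinOn (fun y : ι → ℝ => ∑ i, (a i / 2 * y i ^ 2 + b i * y i))
          {y : ι → ℝ | ∑ i, y i = S ∧ ∀ i, l i ≤ y i ∧ y i ≤ u i} x' → x' = x) ∧
      ∃ lam : ℝ, ∀ i,
        (a i * u i + b i ≤ -lam → x i = u i) ∧
        (-lam ≤ a i * l i + b i → x i = l i) ∧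
        (-lam < a i * u i + b i → a i * l i + b i < -lam → x i = (-lam - b i) / a i) := by
  classical
  set c : ℝ → ι → ℝ := fun lam i => max (l i) (min (u i) ((-lam - b i) / a i)) with hc
  have hcont : Continuous fun lam => ∑ i, c lam i := by
    apply continuous_finset_sum
    intro i _
    fun_prop
  have hne : (Finset.univ : Finset ι).Nonempty := univ_nonempty
  set lam0 : ℝ := univ.inf' hne (fun i => -(a i * u i) - b i) with hlam0
  set lam1 : ℝ := univ.sup' hne (fun i => -(a i * l i) - b i) with hlam1
  have h01 : lam0 ≤ lam1 := by
    obtain ⟨j⟩ := (inferInstance : Nonempty ι)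
    calc lam0 ≤ -(a j * u j) - b j := inf'_le _ (mem_univ j)
      _ ≤ -(a j * l j) - b j := by nlinarith [ha j, hlu j]
      _ ≤ lam1 := le_sup' (fun i => -(a i * l i) - b i) (mem_univ j)
  have hg0 : ∑ i, c lam0 i = ∑ i, u i := by
    refine Finset.sum_congr rfl fun i _ => ?_
    have h1 : lam0 ≤ -(a i * u i) - b i := inf'_le _ (mem_univ i)
    have h2 : u i ≤ (-lam0 - b i) / a i := by
      rw [le_div_iff₀ (ha i)]; linarith
    simp only [hc]
    rw [min_eq_left h2, max_eq_right (hlu i)]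
  have hg1 : ∑ i, c lam1 i = ∑ i, l i := by
    refine Finset.sum_congr rfl fun i _ => ?_
    have h1 : -(a i * l i) - b i ≤ lam1 := le_sup' (fun i => -(a i * l i) - b i) (mem_univ i)
    have h2 : (-lam1 - b i) / a i ≤ l i := by
      rw [div_le_iff₀ (ha i)]; linarith
    simp only [hc]
    rw [min_eq_right (h2.trans (hlu i)), max_eq_left h2]
  have hIVT := intermediate_value_Icc' h01 hcont.continuousOn
  have hSmem : S ∈ Set.Icc ((fun lam => ∑ i, c lam i) lam1) ((fun lam => ∑ i, c lam i) lam0) := by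
    simp only [hg0, hg1]
    exact ⟨hS1, hS2⟩
  obtain ⟨lam, -, hlam⟩ := hIVT hSmem
  set x : ι → ℝ := c lam with hx
  have hxfeas : x ∈ {y : ι → ℝ | ∑ i, y i = S ∧ ∀ i, l i ≤ y i ∧ y i ≤ u i} := by
    refine ⟨hlam, fun i => ⟨le_max_left _ _, ?_⟩⟩
    exact max_le (hlu i) (min_le_left _ _)
  have hat : ∀ i, a i * ((-lam - b i) / a i) = -lam - b i := fun i => by
    rw [mul_div_assoc', mul_div_cancel_left₀ _ (ha i).ne']
  -- KKT per-coordinate inequality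
  have hkkt : ∀ i (v : ℝ), l i ≤ v → v ≤ u i →
      0 ≤ (a i * x i + b i + lam) * (v - x i) := by
    intro i v hv1 hv2
    have hai := ha i
    rcases le_total ((-lam - b i) / a i) (l i) with h | h
    · have hxe : x i = l i := by
        simp only [hx, hc]
        rw [min_eq_right (h.trans (hlu i)), max_eq_left h]
      rw [hxe]
      have h3 : a i * l i ≥ -lam - b i := by
        have := (div_le_iff₀ hai).mp h; linarith
      have : 0 ≤ a i * l i + b i + lam := by linarith
      exact mul_nonneg this (by linarith)
    · rcases le_total (u i) ((-lam - b i) / a i) with h' | h'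
      · have hxe : x i = u i := by
          simp only [hx, hc]
          rw [min_eq_left h', max_eq_right (hlu i)]
        rw [hxe]
        have h3 : a i * u i ≤ -lam - b i := by
          have := (le_div_iff₀ hai).mp h'; linarith
        nlinarith [h3, hv2]
      · have hxe : x i = (-lam - b i) / a i := by
          simp only [hx, hc]
          rw [min_eq_right h', max_eq_right h]
        rw [hxe]
        have : a i * ((-lam - b i) / a i) + b i + lam = 0 := by
          rw [hat i]; ring
        rw [this, zero_mul]
  -- key inequality: value at x plus quadratic gap ≤ value at any feasible point
  have hkey : ∀ x' ∈ {y : ι → ℝ | ∑ i, y i = S ∧ ∀ i, l i ≤ y i ∧ y i ≤ u i},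
      (∑ i, (a i / 2 * x i ^ 2 + b i * x i)) + ∑ i, a i / 2 * (x' i - x i) ^ 2 ≤
        ∑ i, (a i / 2 * x' i ^ 2 + b i * x' i) := by
    intro x' hx'
    have hxS : ∑ i, x i = S := hlam
    have hd : ∑ i, (x' i - x i) = 0 := by
      rw [Finset.sum_sub_distrib, hx'.1, hxS, sub_self]
    have hpt : ∀ i : ι, (a i / 2 * x' i ^ 2 + b i * x' i) =
        (a i / 2 * x i ^ 2 + b i * x i) + a i / 2 * (x' i - x i) ^ 2 +
          (a i * x i + b i + lam) * (x' i - x i) - lam * (x' i - x i) := fun i => by ring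
    have hsum : ∑ i, (a i / 2 * x' i ^ 2 + b i * x' i) =
        (∑ i, (a i / 2 * x i ^ 2 + b i * x i)) + (∑ i, a i / 2 * (x' i - x i) ^ 2) +
          (∑ i, (a i * x i + b i + lam) * (x' i - x i)) - lam * ∑ i, (x' i - x i) := by
      rw [Finset.mul_sum, ← Finset.sum_add_distrib, ← Finset.sum_add_distrib,
        ← Finset.sum_sub_distrib]
      exact Finset.sum_congr rfl fun i _ => hpt i
    have hkkts : 0 ≤ ∑ i, (a i * x i + b i + lam) * (x' i - x i) :=
      Finset.sum_nonneg fun i _ => hkkt i (x' i) (hx'.2 i).1 (hx'.2 i).2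
    rw [hsum, hd]
    linarith
  have hmin : IsMinOn (fun y : ι → ℝ => ∑ i, (a i / 2 * y i ^ 2 + b i * y i))
      {y : ι → ℝ | ∑ i, y i = S ∧ ∀ i, l i ≤ y i ∧ y i ≤ u i} x := by
    rw [isMinOn_iff]
    intro x' hx'
    have := hkey x' hx'
    have hq : (0:ℝ) ≤ ∑ i, a i / 2 * (x' i - x i) ^ 2 :=
      Finset.sum_nonneg fun i _ => mul_nonneg (by linarith [ha i]) (sq_nonneg _)
    simp only [Set.mem_setOf_eq] at *
    linarith
  refine ⟨x, hxfeas, hmin, ?_, ?_⟩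
  · -- uniqueness
    intro x' hx' hmin'
    have h1 := hkey x' hx'
    have h2 : ∑ i, (a i / 2 * x' i ^ 2 + b i * x' i) ≤
        ∑ i, (a i / 2 * x i ^ 2 + b i * x i) := isMinOn_iff.mp hmin' x hxfeas
    have hq : ∑ i, a i / 2 * (x' i - x i) ^ 2 ≤ 0 := by linarith
    have hq0 : ∑ i, a i / 2 * (x' i - x i) ^ 2 = 0 :=
      le_antisymm hq (Finset.sum_nonneg fun i _ => mul_nonneg (by linarith [ha i]) (sq_nonneg _))
    have := (Finset.sum_eq_zero_iff_of_nonneg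
      (fun i _ => mul_nonneg (by linarith [ha i]) (sq_nonneg _))).mp hq0
    funext i
    have hi := this i (mem_univ i)
    have hai := ha i
    have h0 : x' i - x i = 0 := by
      rcases mul_eq_zero.mp hi with h | h
      · exfalso; nlinarith
      · exact pow_eq_zero_iff two_ne_zero |>.mp h
    linarith
  · -- breakpoint characterization
    refine ⟨lam, fun i => ⟨?_, ?_, ?_⟩⟩
    · intro h
      have h2 : u i ≤ (-lam - b i) / a i := by rw [le_div_iff₀ (ha i)]; linarith
      simp only [hx, hc]
      rw [min_eq_left h2, max_eq_right (hlu i)]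
    · intro h
      have h2 : (-lam - b i) / a i ≤ l i := by rw [div_le_iff₀ (ha i)]; linarith
      simp only [hx, hc]
      rw [min_eq_right (h2.trans (hlu i)), max_eq_left h2]
    · intro h1 h2
      have h1' : (-lam - b i) / a i < u i := by rw [div_lt_iff₀ (ha i)]; linarith
      have h2' : l i < (-lam - b i) / a i := by rw [lt_div_iff₀ (ha i)]; linarith
      simp only [hx, hc]
      rw [min_eq_right h1'.le, max_eq_right h2'.le]
end
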